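/- For any formal power series a(t), b(t) ∈ ℂ[[t]], any integers 0 ≤ s, r ≤ l with r − s ≥ 2, and any 0 ≤ w ≤ r − s − 2, one has the identity Σ_{u=s}^{r−1} (−1)^u C(r−s−1, u−s) · (d^w/dt^w)(a(t)^{l−u} b(t)^u) · a(t)^{l−r−s+u} b(t)^{r+s−u} = 0 in ℂ[[t]]. -/

import Mathlib

/-!
Put `m = r - s - 1`, `u = s + j`, `P = a^(l-r+1) b^s` and `L = d^w/dt^w`. The `u`-th summand is
`(-1)^s a^(l-r) b^(s+1)` times `(-1)^j C(m,j) a^j b^(m-j) L(a^(m-j) b^j P)`, and the sum of the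
latter terms is `Φ^m(L)(P)` for the operator `Φ(L) = b L a - a L b` on endomorphisms of `ℂ⟦t⟧`
(`a`, `b` acting by multiplication). As `Φ(L) = b [L, a] - a [L, b]`, `Φ` lowers the order of a
differential operator in Grothendieck's sense by one and kills operators of order `0`. Since
`d^w/dt^w` has order `w < m`, `Φ^m` kills it.
-/

open scoped BigOperators

noncomputable def tDeriv {R : Type*} [CommRing R] (f : PowerSeries R) : PowerSeries R :=
  PowerSeries.mk fun n => ((n + 1 : ℕ) : R) * PowerSeries.coeff (n + 1) f

open Finset
open Algebra (lmul)
open LinearMap (mulLeft mulRight)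

attribute [local instance] LieRing.ofAssociativeRing

theorem Ring.mul_lie {E : Type*} [Ring E] (x y z : E) : ⁅x * y, z⁆ = x * ⁅y, z⁆ + ⁅x, z⁆ * y := by
  simp only [Ring.lie_def]
  noncomm_ring

theorem Commute.mul_lie_of_left {E : Type*} [Ring E] {g f : E} (h : Commute g f) (L : E) :
    ⁅g * L, f⁆ = g * ⁅L, f⁆ := by
  rw [Ring.mul_lie, h.lie_eq, zero_mul, add_zero]

theorem Commute.mul_lie_of_right {E : Type*} [Ring E] {g f : E} (h : Commute g f) (L : E) :
    ⁅L * g, f⁆ = ⁅L, f⁆ * g := by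
  rw [Ring.mul_lie, h.lie_eq, mul_zero, zero_add]

section DifferentialOperators

variable {R A : Type*} [CommRing R] [CommRing A] [Algebra R A]

theorem commute_lmul (f g : A) : Commute (lmul R A f) (lmul R A g) :=
  (Commute.all f g).map (lmul R A)

theorem Derivation.lie_lmul (D : Derivation R A A) (f : A) :
    ⁅(D : Module.End R A), lmul R A f⁆ = lmul R A (D f) := by
  ext g
  simp [Ring.lie_def, D.leibniz, mul_comm]

/-- Grothendieck's differential operators of order at most `n` on `A`. -/
def IsDiffOp : ℕ → Module.End R A → Prop
  | 0, L => ∀ f : A, ⁅L, lmul R A f⁆ = 0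
  | n + 1, L => ∀ f : A, IsDiffOp n ⁅L, lmul R A f⁆

namespace IsDiffOp

theorem add : ∀ {n : ℕ} {L₁ L₂ : Module.End R A},
    IsDiffOp n L₁ → IsDiffOp n L₂ → IsDiffOp n (L₁ + L₂)
  | 0, _, _, h₁, h₂ => fun f => by rw [add_lie, h₁ f, h₂ f, add_zero]
  | _ + 1, _, _, h₁, h₂ => fun f => by rw [add_lie]; exact (h₁ f).add (h₂ f)

theorem sub : ∀ {n : ℕ} {L₁ L₂ : Module.End R A},
    IsDiffOp n L₁ → IsDiffOp n L₂ → IsDiffOp n (L₁ - L₂)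
  | 0, _, _, h₁, h₂ => fun f => by rw [sub_lie, h₁ f, h₂ f, sub_zero]
  | _ + 1, _, _, h₁, h₂ => fun f => by rw [sub_lie]; exact (h₁ f).sub (h₂ f)

theorem lmul_mul : ∀ {n : ℕ} {L : Module.End R A}, IsDiffOp n L → ∀ g : A,
    IsDiffOp n (lmul R A g * L)
  | 0, _, h, g => fun f => by rw [(commute_lmul g f).mul_lie_of_left, h f, mul_zero]
  | _ + 1, _, h, g => fun f => by
    rw [(commute_lmul g f).mul_lie_of_left]
    exact (h f).lmul_mul g

theorem mul_lmul : ∀ {n : ℕ} {L : Module.End R A}, IsDiffOp n L → ∀ g : A,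
    IsDiffOp n (L * lmul R A g)
  | 0, _, h, g => fun f => by rw [(commute_lmul g f).mul_lie_of_right, h f, zero_mul]
  | _ + 1, _, h, g => fun f => by
    rw [(commute_lmul g f).mul_lie_of_right]
    exact (h f).mul_lmul g

theorem mul_derivation (D : Derivation R A A) : ∀ {n : ℕ} {L : Module.End R A},
    IsDiffOp n L → IsDiffOp (n + 1) (L * (D : Module.End R A))
  | 0, _, h => fun f => by
    rw [Ring.mul_lie, D.lie_lmul, h f, zero_mul, add_zero]
    exact h.mul_lmul (D f)
  | _ + 1, _, h => fun f => by
    rw [Ring.mul_lie, D.lie_lmul]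
    exact (h.mul_lmul (D f)).add ((h f).mul_derivation D)

theorem one : IsDiffOp 0 (1 : Module.End R A) := fun _ => (Commute.one_left _).lie_eq

theorem pow_derivation (D : Derivation R A A) (n : ℕ) :
    IsDiffOp n ((D : Module.End R A) ^ n) := by
  induction n with
  | zero => exact one
  | succ n ih => rw [pow_succ]; exact ih.mul_derivation D

end IsDiffOp

variable (R) in
/-- `L ↦ b L a - a L b`, where `a` and `b` act on `A` by multiplication. -/
def twistedCommutator (a b : A) : Module.End R (Module.End R A) :=
  mulLeft R (lmul R A b) * mulRight R (lmul R A a) -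
    mulLeft R (lmul R A a) * mulRight R (lmul R A b)

theorem twistedCommutator_apply_eq_lie (a b : A) (L : Module.End R A) :
    twistedCommutator R a b L =
      lmul R A b * ⁅L, lmul R A a⁆ - lmul R A a * ⁅L, lmul R A b⁆ := by
  simp only [twistedCommutator, Ring.lie_def, mul_sub, LinearMap.sub_apply, Module.End.mul_apply,
    LinearMap.mulLeft_apply, LinearMap.mulRight_apply, ← mul_assoc, (commute_lmul b a).eq]
  abel

theorem pow_twistedCommutator_apply_apply (a b : A) (m : ℕ) (L : Module.End R A) (P : A) :
    (twistedCommutator R a b ^ m) L P = ∑ j ∈ range (m + 1),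
      ((-1 : R) ^ j * (m.choose j : R)) • (a ^ j * b ^ (m - j) * L (a ^ (m - j) * b ^ j * P)) := by
  set X := mulLeft R (lmul R A b) * mulRight R (lmul R A a)
  set Y := mulLeft R (lmul R A a) * mulRight R (lmul R A b)
  have hcomm : Commute ((-1 : R) • Y) X := by
    refine Commute.smul_left ?_ _
    ext L P
    simp [X, Y, mul_left_comm b a]
  -- `(-1 : R) • Y` rather than `-Y`: on this iterated endomorphism ring no `HasDistribNeg`
  -- instance is found for the `Neg` that `-Y` elaborates to, so `neg_pow` is unavailable.
  have hsplit : twistedCommutator R a b = (-1 : R) • Y + X := by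
    ext L P
    simp only [twistedCommutator, Algebra.coe_lmul_eq_mul, LinearMap.sub_apply,
      Module.End.mul_apply, LinearMap.mulRight_apply, LinearMap.mulLeft_apply,
      LinearMap.mul_apply_apply, LinearMap.add_apply, LinearMap.smul_apply, neg_smul, one_smul,
      LinearMap.neg_apply, X, Y]
    abel
  rw [hsplit, hcomm.add_pow, LinearMap.sum_apply, LinearMap.sum_apply]
  refine sum_congr rfl fun j _ => ?_
  rw [smul_pow, (LinearMap.commute_mulLeft_right _ _).mul_pow,
    (LinearMap.commute_mulLeft_right _ _).mul_pow]
  simp only [LinearMap.pow_mulLeft, LinearMap.pow_mulRight, ← map_pow]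
  simp only [Algebra.coe_lmul_eq_mul, ← mul_assoc, Algebra.smul_mul_assoc, LinearMap.smul_apply,
    Module.End.mul_apply, Module.End.natCast_apply, nsmul_eq_mul, LinearMap.mulRight_apply,
    LinearMap.mulLeft_apply, LinearMap.mul_apply_apply, mul_smul, Nat.cast_smul_eq_nsmul]
  congr 1
  ring

theorem IsDiffOp.twistedCommutator_eq_zero {L : Module.End R A} (h : IsDiffOp 0 L) (a b : A) :
    twistedCommutator R a b L = 0 := by
  rw [twistedCommutator_apply_eq_lie, h a, h b, mul_zero, mul_zero, sub_self]

theorem IsDiffOp.twistedCommutator {n : ℕ} {L : Module.End R A} (h : IsDiffOp (n + 1) L)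
    (a b : A) : IsDiffOp n (_root_.twistedCommutator R a b L) := by
  rw [twistedCommutator_apply_eq_lie]
  exact ((h a).lmul_mul b).sub ((h b).lmul_mul a)

theorem IsDiffOp.pow_twistedCommutator_eq_zero : ∀ {n m : ℕ} {L : Module.End R A},
    IsDiffOp n L → n < m → ∀ a b : A, (_root_.twistedCommutator R a b ^ m) L = 0
  | 0, _ + 1, _, h, _, a, b => by
    rw [pow_succ, Module.End.mul_apply, h.twistedCommutator_eq_zero, map_zero]
  | _ + 1, _ + 1, _, h, hm, a, b => by
    rw [pow_succ, Module.End.mul_apply]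
    exact (h.twistedCommutator a b).pow_twistedCommutator_eq_zero (by omega) a b

theorem sum_Icc_eq_pow_twistedCommutator (L : Module.End R A) (a b : A) {l s r : ℕ}
    (hr : r ≤ l) (hsr : s < r) :
    ∑ u ∈ Icc s (r - 1), ((-1 : R) ^ u * ((r - s - 1).choose (u - s) : R)) •
        (L (a ^ (l - u) * b ^ u) * (a ^ (l - (r + s - u)) * b ^ (r + s - u))) =
      (-1 : R) ^ s • (a ^ (l - r) * b ^ (s + 1) *
        (twistedCommutator R a b ^ (r - s - 1)) L (a ^ (l - r + 1) * b ^ s)) := by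
  obtain ⟨m, rfl⟩ : ∃ m, r = s + m + 1 := ⟨r - s - 1, by omega⟩
  rw [pow_twistedCommutator_apply_apply, mul_sum, smul_sum, show s + m + 1 - 1 = s + m by omega,
    ← Ico_add_one_right_eq_Icc, sum_Ico_eq_sum_range, show s + m + 1 - s - 1 = m by omega,
    show s + m + 1 - s = m + 1 by omega]
  refine sum_congr rfl fun j hj => ?_
  have hjm : j ≤ m := Nat.lt_succ_iff.mp (mem_range.mp hj)
  have harg : a ^ (l - (s + j)) * b ^ (s + j) =
      a ^ (m - j) * b ^ j * (a ^ (l - (s + m + 1) + 1) * b ^ s) := by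
    rw [show l - (s + j) = m - j + (l - (s + m + 1) + 1) by omega, pow_add, pow_add]
    ring
  have hcof : a ^ (l - (s + m + 1 + s - (s + j))) * b ^ (s + m + 1 + s - (s + j)) =
      a ^ j * b ^ (m - j) * (a ^ (l - (s + m + 1)) * b ^ (s + 1)) := by
    rw [show l - (s + m + 1 + s - (s + j)) = j + (l - (s + m + 1)) by omega,
      show s + m + 1 + s - (s + j) = m - j + (s + 1) by omega, pow_add, pow_add]
    ring
  rw [Nat.add_sub_cancel_left, harg, hcof, mul_smul_comm, smul_smul, pow_add]
  congr 1 <;> ring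

end DifferentialOperators

theorem tDeriv_eq_derivative {R : Type*} [CommRing R] (f : PowerSeries R) :
    tDeriv f = PowerSeries.derivative R f := by
  ext n
  simp [tDeriv, PowerSeries.coeff_derivative, mul_comm]

theorem veronese_relation_vanishes (l : ℕ) (a b : PowerSeries ℂ)
    (s r w : ℕ) (hr : r ≤ l) (hw : w + s + 2 ≤ r) :
    ∑ u ∈ Finset.Icc s (r - 1),
      ((-1 : ℂ) ^ u * ((r - s - 1).choose (u - s) : ℂ)) •
        (tDeriv^[w] (a ^ (l - u) * b ^ u) * (a ^ (l - (r + s - u)) * b ^ (r + s - u))) = 0 := by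
  let D : Module.End ℂ (PowerSeries ℂ) := PowerSeries.derivative ℂ
  have hiter : tDeriv^[w] = ⇑(D ^ w) := by
    rw [Module.End.coe_pow]
    congr
    exact funext tDeriv_eq_derivative
  rw [hiter, sum_Icc_eq_pow_twistedCommutator _ a b hr (by omega),
    (IsDiffOp.pow_derivation _ w).pow_twistedCommutator_eq_zero (by omega)]
  simp
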